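/- Let κ be an infinite cardinal and let G be a connected κ-regular graph. Then for every cardinal λ with 1 ≤ λ ≤ κ, G contains a spanning λ-regular subgraph. -/

import Mathlib

open Cardinal

universe u

/-- `G` is `κ`-regular: every vertex has degree (neighbourhood cardinality) exactly `κ`. -/
def SimpleGraph.CardRegular {V : Type u} (G : SimpleGraph V) (κ : Cardinal.{u}) : Prop :=
  ∀ v : V, #(G.neighborSet v) = κ

/-- `G` has no isolated vertices. -/
def SimpleGraph.NoIsolatedVerts {V : Type u} (G : SimpleGraph V) : Prop :=
  ∀ v : V, ∃ w : V, G.Adj v w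

/-- A factorization of `G`: a family of spanning subgraphs, pairwise edge-disjoint,
whose edge sets cover `E(G)`. -/
def SimpleGraph.IsFactorization {V : Type u} {ι : Type u} (G : SimpleGraph V)
    (F : ι → SimpleGraph V) : Prop :=
  (∀ i, F i ≤ G) ∧ (Pairwise fun i j => Disjoint (F i).edgeSet (F j).edgeSet) ∧
    (⋃ i, (F i).edgeSet) = G.edgeSet

/-- In the forest `F` rooted at `v₀`, `u` is a child of `w`. -/
def SimpleGraph.IsChild {V : Type u} (F : SimpleGraph V) (v₀ u w : V) : Prop :=
  F.Adj w u ∧ F.Reachable v₀ u ∧ F.dist v₀ u = F.dist v₀ w + 1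

/-- The graph with edges `v_j v_i` for `v_i ∈ C j`, `j < i`. -/
def childGraph {V I : Type u} [LT I] (v : I ≃ V) (C : I → Set V) : SimpleGraph V :=
  SimpleGraph.fromEdgeSet {e | ∃ i j : I, j < i ∧ (v i : V) ∈ C j ∧ e = s(v j, v i)}

/-- Disjoint union of `ι`-many copies of `T`. -/
def copiesGraph (ι : Type u) {W : Type u} (T : SimpleGraph W) : SimpleGraph (ι × W) where
  Adj p q := p.1 = q.1 ∧ T.Adj p.2 q.2
  symm := by constructor; rintro p q ⟨h1, h2⟩; exact ⟨h1.symm, h2.symm⟩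
  loopless := by constructor; rintro p ⟨-, h⟩; exact T.ne_of_adj h rfl

/-!
A connected graph of infinite degree `κ` has at most `κ` vertices, so its vertices can be
well-ordered with every initial segment of size `< κ`. Along such an order a perfect matching is
built greedily: a vertex not yet matched is matched to a later neighbour that is still free, and
fewer than `κ` of its `κ` neighbours are excluded. Deleting fewer than `κ` matchings keeps the
graph `κ`-regular, so transfinitely many (`λ ≤ κ`) pairwise edge-disjoint perfect matchings can be
chosen one after another; their union is a spanning `λ`-regular subgraph. A perfect matching is
encoded as an involution `f` with `v` adjacent to `f v` for every `v`.
-/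

open Function

theorem Cardinal.mk_diff_eq_of_lt {α : Type u} {S T : Set α} {κ : Cardinal.{u}} (hκ : ℵ₀ ≤ κ)
    (hS : #S = κ) (hT : #T < κ) : #(S \ T : Set α) = κ := by
  refine le_antisymm (hS ▸ mk_le_mk_of_subset Set.sdiff_subset) (not_lt.1 fun h => ?_)
  have hle : #S ≤ #(S \ T : Set α) + #T :=
    (mk_le_mk_of_subset (Set.subset_sdiff_union S T)).trans (mk_union_le _ _)
  exact (hS ▸ hle).not_gt (add_lt_of_lt hκ h hT)

theorem WellFounded.exists_fun_forall_of_exists {α β : Sort*} {r : α → α → Prop}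
    (hr : WellFounded r) (P : (a : α) → ((b : α) → r b a → β) → β → Prop)
    (step : ∀ a ih, ∃ x, P a ih x) : ∃ f : α → β, ∀ a, P a (fun b _ => f b) (f a) := by
  choose g hg using step
  exact ⟨hr.fix g, fun a => by rw [hr.fix_eq g a]; exact hg _ _⟩

namespace SimpleGraph

variable {V : Type u} {G : SimpleGraph V} {κ : Cardinal.{u}}

theorem Connected.mk_le (hconn : G.Connected) (hκ : ℵ₀ ≤ κ)
    (hdeg : ∀ v, #(G.neighborSet v) ≤ κ) : #V ≤ κ := by
  obtain ⟨v₀⟩ := hconn.nonempty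
  let ball : ℕ → Set V := fun n => {v | ∃ p : G.Walk v v₀, p.length < n}
  have ball_succ : ∀ n, ball (n + 1) ⊆ {v₀} ∪ ⋃ x ∈ ball n, G.neighborSet x := by
    rintro n v ⟨_ | ⟨hvx, p⟩, hp⟩
    · exact .inl rfl
    · exact .inr (Set.mem_biUnion ⟨p, by simpa using hp⟩ hvx.symm)
  have mk_ball : ∀ n, #(ball n) ≤ κ := by
    intro n
    induction n with
    | zero => simp [ball]
    | succ n ih =>
      calc #(ball (n + 1))
          ≤ #({v₀} : Set V) + #(ball n) * ⨆ x : ball n, #(G.neighborSet x) := by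
            grw [mk_le_mk_of_subset (ball_succ n), mk_union_le, mk_biUnion_le]
        _ ≤ κ + κ * κ := by
            gcongr
            · simpa using one_le_aleph0.trans hκ
            · exact ciSup_le' fun x => hdeg x
        _ = κ := by rw [mul_eq_self hκ, add_eq_self hκ]
  refine mk_le_of_countable_eventually_mem (l := Filter.atTop) (fun v => ?_) mk_ball
  obtain ⟨p⟩ := hconn v v₀
  exact Filter.eventually_atTop.2 ⟨p.length + 1, fun n hn => ⟨p, hn⟩⟩

theorem exists_involutive_adj_of_mk_Iio_lt [LinearOrder V] [WellFoundedLT V] (hκ : ℵ₀ ≤ κ)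
    (hIio : ∀ v : V, #(Set.Iio v) < κ) (hreg : G.CardRegular κ) :
    ∃ f : V → V, Involutive f ∧ ∀ v, G.Adj v (f v) := by
  -- `v` is matched back to the earlier vertex that chose it, or else to a later free neighbour.
  let P : (v : V) → ((u : V) → u < v → V) → V → Prop := fun v ih w =>
    (∃ hw : w < v, ih w hw = v) ∨
      ((∀ u hu, ih u hu ≠ v) ∧ v < w ∧ G.Adj v w ∧ ∀ u hu, ih u hu ≠ w)
  have step : ∀ v ih, ∃ w, P v ih w := by
    intro v ih
    by_cases hv : ∃ u hu, ih u hu = v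
    · obtain ⟨u, hu, h⟩ := hv
      exact ⟨u, .inl ⟨hu, h⟩⟩
    push Not at hv
    let used : Set V := Set.Iic v ∪ Set.range fun u : Set.Iio v => ih u u.2
    have mk_used : #used < κ := by
      refine (mk_union_le _ _).trans_lt (add_lt_of_lt hκ ?_ (mk_range_le.trans_lt (hIio v)))
      rw [← Set.Iio_insert]
      exact mk_insert_le.trans_lt (add_lt_of_lt hκ (hIio v) (one_lt_aleph0.trans_le hκ))
    obtain ⟨w, hvw, hw⟩ : (G.neighborSet v \ used).Nonempty := by
      rw [← Set.nonempty_coe_sort, ← mk_ne_zero_iff, mk_diff_eq_of_lt hκ (hreg v) mk_used]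
      exact (aleph0_pos.trans_le hκ).ne'
    simp only [used, Set.mem_union, Set.mem_Iic, Set.mem_range, Subtype.exists, Set.mem_Iio,
      not_or, not_le, not_exists] at hw
    exact ⟨w, .inr ⟨hv, hw.1, hvw, hw.2⟩⟩
  obtain ⟨f, hf⟩ := wellFounded_lt.exists_fun_forall_of_exists P step
  simp only [P] at hf
  have hinv : Involutive f := by
    intro v
    rcases hf v with ⟨-, h⟩ | ⟨-, hvw, -, hfresh⟩
    · exact h
    rcases hf (f v) with ⟨hlt, h⟩ | ⟨hnot, -⟩
    · -- `f v` was a fresh choice for `v`, so only `v` can be the earlier vertex that chose it.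
      rcases lt_trichotomy (f (f v)) v with hu | heq | hu
      · exact absurd h (hfresh _ hu)
      · exact heq
      · rcases hf (f (f v)) with ⟨hlt', -⟩ | ⟨-, -, -, hfresh'⟩
        · rw [h] at hlt'
          exact absurd hlt (asymm hlt')
        · exact absurd h.symm (hfresh' v hu)
    · exact absurd rfl (hnot v hvw)
  refine ⟨f, hinv, fun v => ?_⟩
  rcases hf v with ⟨hlt, -⟩ | ⟨-, -, hadj, -⟩
  · rcases hf (f v) with ⟨hlt', -⟩ | ⟨-, -, hadj, -⟩
    · rw [hinv v] at hlt'
      exact absurd hlt (asymm hlt')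
    · rw [hinv v] at hadj
      exact hadj.symm
  · exact hadj

theorem exists_involutive_adj (hκ : ℵ₀ ≤ κ) (hV : #V ≤ κ) (hreg : G.CardRegular κ) :
    ∃ f : V → V, Involutive f ∧ ∀ v, G.Adj v (f v) := by
  obtain ⟨φ⟩ := (le_def _ _).1 (hV.trans_eq (mk_ord_toType κ).symm)
  let := LinearOrder.lift' φ φ.injective
  have : WellFoundedLT V := ⟨InvImage.wf φ wellFounded_lt⟩
  refine exists_involutive_adj_of_mk_Iio_lt hκ (fun v => ?_) hreg
  calc #(Set.Iio v) ≤ #(Set.Iio (φ v)) := mk_preimage_of_injective φ _ φ.injective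
    _ < κ := by simpa using mk_Iio_lt (φ v)

theorem exists_involutive_adj_forall_ne (hκ : ℵ₀ ≤ κ) (hV : #V ≤ κ) (hreg : G.CardRegular κ)
    {ι : Type u} (hι : #ι < κ) (g : ι → V → V) (hg : ∀ i, Involutive (g i)) :
    ∃ f : V → V, Involutive f ∧ ∀ v, G.Adj v (f v) ∧ ∀ i, g i v ≠ f v := by
  let H : SimpleGraph V :=
    { Adj u w := G.Adj u w ∧ ∀ i, g i u ≠ w
      symm := ⟨fun u w ⟨huw, hne⟩ => ⟨huw.symm, fun i h => hne i (by rw [← h, hg i w])⟩⟩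
      loopless := ⟨fun v h => G.loopless.irrefl v h.1⟩ }
  have hH : H.CardRegular κ := by
    intro v
    have : H.neighborSet v = G.neighborSet v \ Set.range fun i => g i v := by
      ext w
      simp [H, eq_comm]
    rw [this]
    exact mk_diff_eq_of_lt hκ (hreg v) (mk_range_le.trans_lt hι)
  obtain ⟨f, hinv, hadj⟩ := exists_involutive_adj hκ hV hH
  exact ⟨f, hinv, hadj⟩

theorem exists_involutive_family {ι : Type u} [LinearOrder ι] [WellFoundedLT ι] (hκ : ℵ₀ ≤ κ)
    (hV : #V ≤ κ) (hreg : G.CardRegular κ) (hι : ∀ i : ι, #(Set.Iio i) < κ) :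
    ∃ M : ι → V → V, (∀ i, Involutive (M i)) ∧ (∀ i v, G.Adj v (M i v)) ∧
      ∀ v, Injective (M · v) := by
  let P : (i : ι) → ((j : ι) → j < i → {f : V → V // Involutive f}) →
      {f : V → V // Involutive f} → Prop := fun i ih f =>
    ∀ v, G.Adj v (f.1 v) ∧ ∀ j hj, (ih j hj).1 v ≠ f.1 v
  have step : ∀ i ih, ∃ f, P i ih f := by
    intro i ih
    obtain ⟨f, hinv, hf⟩ := exists_involutive_adj_forall_ne hκ hV hreg (hι i)
      (fun j : Set.Iio i => (ih j j.2).1) (fun j => (ih j j.2).2)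
    exact ⟨⟨f, hinv⟩, fun v => ⟨(hf v).1, fun j hj => (hf v).2 ⟨j, hj⟩⟩⟩
  obtain ⟨M, hM⟩ := wellFounded_lt.exists_fun_forall_of_exists P step
  refine ⟨fun i => (M i).1, fun i => (M i).2, fun i v => (hM i v).1, fun v i j hij => ?_⟩
  by_contra hne
  rcases lt_or_gt_of_ne hne with h | h
  · exact (hM j v).2 i h hij
  · exact (hM i v).2 j h hij.symm

theorem exists_le_cardRegular_of_involutive {ι : Type u} (M : ι → V → V)
    (hinv : ∀ i, Involutive (M i)) (hadj : ∀ i v, G.Adj v (M i v))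
    (hinj : ∀ v, Injective (M · v)) :
    ∃ F ≤ G, F.CardRegular #ι := by
  let F : SimpleGraph V :=
    { Adj u w := ∃ i, M i u = w
      symm := ⟨fun u w ⟨i, h⟩ => ⟨i, h ▸ hinv i u⟩⟩
      loopless := ⟨fun v ⟨i, h⟩ => (hadj i v).ne h.symm⟩ }
  exact ⟨F, fun u w ⟨i, h⟩ => h ▸ hadj i u, fun v => mk_range_eq _ (hinj v)⟩

end SimpleGraph

theorem stmt_18_general (κ lam : Cardinal.{u}) (hκ : ℵ₀ ≤ κ) (hlamκ : lam ≤ κ)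
    {V : Type u} (G : SimpleGraph V) (hconn : G.Connected) (hreg : G.CardRegular κ) :
    ∃ F : SimpleGraph V, F ≤ G ∧ F.CardRegular lam := by
  have hV : #V ≤ κ := hconn.mk_le hκ fun v => (hreg v).le
  obtain ⟨M, hinv, hadj, hinj⟩ := G.exists_involutive_family (ι := lam.ord.ToType) hκ hV hreg
    fun i => (by simpa using mk_Iio_lt i : #(Set.Iio i) < lam).trans_le hlamκ
  obtain ⟨F, hFG, hF⟩ := G.exists_le_cardRegular_of_involutive M hinv hadj hinj
  exact ⟨F, hFG, mk_ord_toType lam ▸ hF⟩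

/-- Every connected `κ`-regular graph contains a spanning `λ`-regular subgraph for every
cardinal `1 ≤ λ ≤ κ`. -/
theorem stmt_18 (κ lam : Cardinal.{u}) (hκ : ℵ₀ ≤ κ) (hlam1 : 1 ≤ lam) (hlamκ : lam ≤ κ)
    {V : Type u} (G : SimpleGraph V) (hconn : G.Connected) (hreg : G.CardRegular κ) :
    ∃ F : SimpleGraph V, F ≤ G ∧ F.CardRegular lam :=
  stmt_18_general κ lam hκ hlamκ G hconn hreg
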